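/- Let q = p^β = ef + 1 be a prime power with e, f > 1, and suppose the cyclotomic class C₀^e is a proper (q, f, λ, μ)-partial difference set. Then: (i) if e > f, then C₀^e ∪ {0} is a subfield of GF(q); (ii) if e < f, then C₀^e ∪ {0} is not a subfield of GF(q) and μ ≥ 1; (iii) the case e = f cannot occur when f > 2. -/

import Mathlib

open Finset

section Defs

variable {G : Type*} [AddGroup G] [DecidableEq G]

/-- The multiset of internal differences `x - y` (`x ≠ y`) of a finset. -/
def intDiff (D : Finset G) : Multiset G :=
  ((D ×ˢ D).filter fun p => p.1 ≠ p.2).val.map fun p => p.1 - p.2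

/-- The multiset of external differences `x - y`, `x ∈ D₁`, `y ∈ D₂`. -/
def extDiff (D₁ D₂ : Finset G) : Multiset G :=
  (D₁ ×ˢ D₂).val.map fun p => p.1 - p.2

variable {ι : Type*} [Fintype ι] [DecidableEq ι]

/-- The multiset of all internal differences of a family of sets. -/
def famInt (D : ι → Finset G) : Multiset G := ∑ i, intDiff (D i)

/-- The multiset of all external differences between distinct members of a family of sets. -/
def famExt (D : ι → Finset G) : Multiset G :=
  ∑ i, ∑ j, if j = i then 0 else extDiff (D i) (D j)

/-- The union of the members of a family of sets. -/
def famU (D : ι → Finset G) : Finset G := Finset.univ.biUnion D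

variable [Fintype G]

/-- `D` is an `(n,k,λ)`-difference set: `Δ(D) = λ(G*)`. -/
def IsDS (n k : ℕ) (lam : ℤ) (D : Finset G) : Prop :=
  Fintype.card G = n ∧ D.card = k ∧
    ∀ x : G, ((intDiff D).count x : ℤ) = if x = 0 then 0 else lam

/-- `P` is an `(n,k,λ,μ)`-partial difference set: `Δ(P) = λ(P) + μ(G* \ P)`. -/
def IsPDS (n k : ℕ) (lam mu : ℤ) (P : Finset G) : Prop :=
  Fintype.card G = n ∧ P.card = k ∧
    ∀ x : G, ((intDiff P).count x : ℤ) =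
      if x ∈ P then lam else if x = 0 then 0 else mu

/-- `D` is a family of `m` pairwise disjoint `k`-subsets of a group of order `n`. -/
def FamShape (n m k : ℕ) (D : ι → Finset G) : Prop :=
  Fintype.card G = n ∧ Fintype.card ι = m ∧ (∀ i, (D i).card = k) ∧
    ∀ i j, i ≠ j → Disjoint (D i) (D j)

/-- `(n,m,k,λ)`-disjoint difference family: `⋃ᵢ Δ(Dᵢ) = λ(G*)`. -/
def IsDDF (n m k : ℕ) (lam : ℤ) (D : ι → Finset G) : Prop :=
  FamShape n m k D ∧
    ∀ x : G, ((famInt D).count x : ℤ) = if x = 0 then 0 else lam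

/-- `(n,m,k,λ)`-external difference family: `⋃_{i≠j} Δ(Dᵢ,Dⱼ) = λ(G*)`. -/
def IsEDF (n m k : ℕ) (lam : ℤ) (D : ι → Finset G) : Prop :=
  FamShape n m k D ∧
    ∀ x : G, ((famExt D).count x : ℤ) = if x = 0 then 0 else lam

/-- `(n,m,k,λ,μ)`-disjoint partial difference family:
sets in `G*`, `⋃ᵢ Δ(Dᵢ) = λ(S) + μ(G* \ S)` where `S = ⋃ᵢ Dᵢ`. -/
def IsDPDF (n m k : ℕ) (lam mu : ℤ) (D : ι → Finset G) : Prop :=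
  FamShape n m k D ∧ (∀ i, (0 : G) ∉ D i) ∧
    ∀ x : G, ((famInt D).count x : ℤ) =
      if x ∈ famU D then lam else if x = 0 then 0 else mu

/-- `(n,m,k,λ,μ)`-external partial difference family:
sets in `G*`, `⋃_{i≠j} Δ(Dᵢ,Dⱼ) = λ(S) + μ(G* \ S)` where `S = ⋃ᵢ Dᵢ`. -/
def IsEPDF (n m k : ℕ) (lam mu : ℤ) (D : ι → Finset G) : Prop :=
  FamShape n m k D ∧ (∀ i, (0 : G) ∉ D i) ∧
    ∀ x : G, ((famExt D).count x : ℤ) =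
      if x ∈ famU D then lam else if x = 0 then 0 else mu

end Defs

section FieldDefs

variable {F : Type*} [Field F] [DecidableEq F]

/-- `α` is a primitive element: every nonzero element is a power of `α`. -/
def IsPrimitiveElt (α : F) : Prop := ∀ x : F, x ≠ 0 → ∃ k : ℕ, x = α ^ k

/-- The coset `α^i⟨α^e⟩` of the cyclotomic class of order `e` (of size `f`). -/
def cyclo (α : F) (e f i : ℕ) : Finset F :=
  (Finset.range f).image fun j => α ^ (i + e * j)

/-- The cyclotomic number `(i,j)_e`: the number of pairs `(zᵢ, zⱼ) ∈ Cᵢ × Cⱼ` with `zᵢ + 1 = zⱼ`. -/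
def cycNum (α : F) (e f i j : ℕ) : ℕ :=
  ((cyclo α e f i ×ˢ cyclo α e f j).filter fun p => p.1 + 1 = p.2).card

/-- `Φᵢ = {x ∈ C₀^e : x ≠ 1, x - 1 ∈ α^i C₀^ε}`. -/
def Phi (α : F) (e f ε ρ i : ℕ) : Finset F :=
  (cyclo α e f 0).filter fun x => x ≠ 1 ∧ x - 1 ∈ cyclo α ε ρ i

/-- `φᵢ = |Φᵢ|`. -/
def phi (α : F) (e f ε ρ i : ℕ) : ℕ := (Phi α e f ε ρ i).card

end FieldDefs

/-!
`D = C₀^e` is the group of `f`-th roots of unity. Counting the `f(f-1)` differences of `D` gives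
`λ + (e-1)μ = f-1`, and since `x` and `-x` occur equally often as differences, properness forces
`-1 ∈ D`. If `μ = 0` then `D` is closed under differences, so `D ∪ {0}` is a subfield of order
`f+1`; it misses `α`, so `ef + 1 = q ≥ (f+1)²`, i.e. `e ≥ f+2`. Hence `e > f` forces `μ = 0`,
`e < f` rules out the subfield and with it `μ = 0`, and for `e = f` the relation leaves only
`λ = 0, μ = 1`, which fails because `w - 1 = (-1) - (-w)` for `w = α^e ≠ ±1`.
-/

section DifferenceMultiset

variable {G : Type*} [AddGroup G] [DecidableEq G]

lemma intDiff_eq_map_offDiag (D : Finset G) :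
    intDiff D = D.offDiag.val.map fun p => p.1 - p.2 := by
  have : ((D ×ˢ D).filter fun p : G × G => p.1 ≠ p.2) = D.offDiag := by
    ext p; simp [and_assoc]
  rw [intDiff, this]

lemma card_intDiff (D : Finset G) : Multiset.card (intDiff D) = #D * #D - #D := by
  rw [intDiff_eq_map_offDiag, Multiset.card_map]
  exact D.offDiag_card

lemma count_intDiff (D : Finset G) (x : G) :
    (intDiff D).count x = #{p ∈ D.offDiag | p.1 - p.2 = x} := by
  rw [intDiff_eq_map_offDiag, Multiset.count_map, Finset.card_def, Finset.filter_val]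
  simp only [eq_comm]

lemma count_intDiff_neg (D : Finset G) (x : G) :
    (intDiff D).count (-x) = (intDiff D).count x := by
  rw [count_intDiff, count_intDiff]
  refine Finset.card_nbij' Prod.swap Prod.swap ?_ ?_ (fun _ _ => rfl) (fun _ _ => rfl) <;>
  · rintro ⟨a, b⟩ h
    simp only [Finset.coe_filter, Finset.mem_offDiag, Set.mem_ofPred_eq, Prod.fst_swap,
      Prod.snd_swap] at h ⊢
    exact ⟨⟨h.1.2.1, h.1.1, h.1.2.2.symm⟩, by simp only [← neg_sub a b, h.2, neg_neg]⟩

lemma sub_mem_intDiff {D : Finset G} {a b : G} (ha : a ∈ D) (hb : b ∈ D) (hab : a ≠ b) :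
    a - b ∈ intDiff D := by
  rw [intDiff_eq_map_offDiag]
  exact Multiset.mem_map.2 ⟨(a, b), Finset.mem_offDiag.2 ⟨ha, hb, hab⟩, rfl⟩

lemma two_le_count_intDiff {D : Finset G} {a b c d : G} (ha : a ∈ D) (hb : b ∈ D)
    (hc : c ∈ D) (hd : d ∈ D) (hab : a ≠ b) (hne : (a, b) ≠ (c, d)) (h : a - b = c - d) :
    2 ≤ (intDiff D).count (a - b) := by
  have hcd : c ≠ d := fun hcd => hab (sub_eq_zero.1 (h.trans (sub_eq_zero.2 hcd)))
  rw [count_intDiff, ← Finset.card_pair hne]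
  refine Finset.card_le_card fun p hp => ?_
  rcases Finset.mem_insert.1 hp with rfl | hp
  · simp [ha, hb, hab]
  · rw [Finset.mem_singleton.1 hp]
    simp [hc, hd, hcd, h]

end DifferenceMultiset

namespace IsPDS

variable {G : Type*} [AddGroup G] [DecidableEq G] [Fintype G] {n k : ℕ} {lam mu : ℤ}
  {P : Finset G}

lemma count_of_mem (hP : IsPDS n k lam mu P) {x : G} (hx : x ∈ P) :
    ((intDiff P).count x : ℤ) = lam := by
  rw [hP.2.2, if_pos hx]

lemma count_of_notMem (hP : IsPDS n k lam mu P) {x : G} (hx : x ∉ P) (hx0 : x ≠ 0) :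
    ((intDiff P).count x : ℤ) = mu := by
  rw [hP.2.2, if_neg hx, if_neg hx0]

lemma lam_nonneg (hP : IsPDS n k lam mu P) {x : G} (hx : x ∈ P) : 0 ≤ lam :=
  hP.count_of_mem hx ▸ Int.natCast_nonneg _

lemma mu_nonneg (hP : IsPDS n k lam mu P) {x : G} (hx : x ∉ P) (hx0 : x ≠ 0) : 0 ≤ mu :=
  hP.count_of_notMem hx hx0 ▸ Int.natCast_nonneg _

lemma neg_mem (hP : IsPDS n k lam mu P) (hproper : lam ≠ mu) {x : G} (hx : x ∈ P) :
    -x ∈ P := by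
  by_contra hnx
  have hx0 : -x ≠ 0 := fun h => hnx (h ▸ neg_eq_zero.1 h ▸ hx)
  apply hproper
  rw [← hP.count_of_mem hx, ← hP.count_of_notMem hnx hx0, count_intDiff_neg]

lemma sub_mem_of_mu_eq_zero (hP : IsPDS n k lam mu P) (hmu : mu = 0) {a b : G} (ha : a ∈ P)
    (hb : b ∈ P) (hab : a ≠ b) : a - b ∈ P := by
  by_contra h
  have hpos := Multiset.count_pos.2 (sub_mem_intDiff ha hb hab)
  have := hP.count_of_notMem h (sub_ne_zero.2 hab)
  omega

lemma eq_of_sub_eq_sub (hP : IsPDS n k lam mu P) (hlam : lam ≤ 1) (hmu : mu ≤ 1)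
    {a b c d : G} (ha : a ∈ P) (hb : b ∈ P) (hc : c ∈ P) (hd : d ∈ P) (hab : a ≠ b) (h : a - b = c - d) :
    a = c ∧ b = d := by
  by_contra hne
  have h2 := two_le_count_intDiff ha hb hc hd hab (by simpa using hne) h
  by_cases hmem : a - b ∈ P
  · have := hP.count_of_mem hmem; omega
  · have := hP.count_of_notMem hmem (sub_ne_zero.2 hab); omega

lemma card_mul_lam_add_mul_mu (hP : IsPDS n k lam mu P) (h0 : (0 : G) ∉ P) :
    k * lam + ((n : ℤ) - k - 1) * mu = k * ((k : ℤ) - 1) := by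
  obtain ⟨hn, hk, hcount⟩ := hP
  have hcompl : #{x | x ∉ P ∧ ¬x = (0 : G)} + (k + 1) = n := by
    have : ({x | x ∉ P ∧ ¬x = (0 : G)} : Finset G) = Finset.univ \ insert 0 P := by
      ext x; simp [and_comm]
    rw [this, Finset.card_sdiff_of_subset (Finset.subset_univ _), Finset.card_univ,
      Finset.card_insert_of_notMem h0, hk, hn]
    have := Finset.card_le_univ (insert 0 P)
    rw [Finset.card_insert_of_notMem h0, hk, hn] at this
    omega
  have htotal : ∑ x : G, ((intDiff P).count x : ℤ) = k * k - k := by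
    have hle : k ≤ k * k := Nat.le_mul_self k
    rw [← Nat.cast_sum, Multiset.sum_count_eq_card fun _ _ => Finset.mem_univ _,
      card_intDiff, hk, Nat.cast_sub hle, Nat.cast_mul]
  simp only [hcount, Finset.sum_ite, Finset.sum_const_zero, Finset.sum_const,
    Finset.filter_filter, Finset.filter_mem_eq_inter, Finset.univ_inter, hk, zero_add,
    nsmul_eq_mul] at htotal
  have hcompl_int : (#{x | x ∉ P ∧ ¬x = (0 : G)} : ℤ) = n - k - 1 := by
    rw [← hcompl]; push_cast; ring
  rw [hcompl_int] at htotal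
  linear_combination htotal

end IsPDS

section FieldFacts

variable {F : Type*} [Field F]

lemma exists_subfield_coe_eq_insert_zero {D : Set F} (h1 : (1 : F) ∈ D) (hneg : (-1 : F) ∈ D)
    (hmul : ∀ x ∈ D, ∀ y ∈ D, x * y ∈ D) (hinv : ∀ x ∈ D, x⁻¹ ∈ D)
    (hsub : ∀ x ∈ D, ∀ y ∈ D, x ≠ y → x - y ∈ D) :
    ∃ S : Subfield F, (S : Set F) = insert 0 D := by
  have hnegD : ∀ x ∈ D, -x ∈ D := fun x hx => by simpa using hmul _ hneg x hx
  refine ⟨{ carrier := insert 0 D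
            mul_mem' := ?_, one_mem' := Or.inr h1, add_mem' := ?_, zero_mem' := Or.inl rfl
            neg_mem' := ?_, inv_mem' := ?_ }, rfl⟩
  · rintro x y (rfl | hx) (rfl | hy)
    exacts [Or.inl (zero_mul _), Or.inl (zero_mul _), Or.inl (mul_zero _), Or.inr (hmul x hx y hy)]
  · rintro x y (rfl | hx) (rfl | hy)
    · exact Or.inl (add_zero 0)
    · simpa using Or.inr hy
    · simpa using Or.inr hx
    · by_cases hxy : x = -y
      · exact Or.inl (by rw [hxy, neg_add_cancel])
      · exact Or.inr (by simpa using hsub x hx (-y) (hnegD y hy) hxy)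
  · rintro x (rfl | hx)
    exacts [Or.inl neg_zero, Or.inr (hnegD x hx)]
  · rintro x (rfl | hx)
    exacts [Or.inl inv_zero, Or.inr (hinv x hx)]

lemma Subfield.card_sq_le_card [Fintype F] (S : Subfield F) {x : F} (hx : x ∉ S) :
    Nat.card S ^ 2 ≤ Fintype.card F := by
  classical
  let _ : Fintype S := Fintype.ofFinite S
  have hlt : Fintype.card S < Fintype.card F :=
    Fintype.card_lt_of_injective_of_notMem Subtype.val Subtype.val_injective (b := x) (by simpa)
  rw [Module.card_eq_pow_finrank (K := S) (V := F)] at hlt ⊢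
  rw [Nat.card_eq_fintype_card]
  refine Nat.pow_le_pow_right Fintype.card_pos ?_
  by_contra! ht
  interval_cases Module.finrank S F <;> simp_all

lemma IsPrimitiveElt.ne_zero [Fintype F] {α : F} (hα : IsPrimitiveElt α)
    (hF : 2 < Fintype.card F) : α ≠ 0 := by
  classical
  rintro rfl
  have hsub : (Finset.univ : Finset F) ⊆ {0, 1} := by
    intro x _
    by_cases hx : x = 0
    · simp [hx]
    · obtain ⟨k, rfl⟩ := hα x hx
      rcases k with _ | k <;> simp
  have := (Finset.card_le_card hsub).trans Finset.card_le_two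
  rw [Finset.card_univ] at this
  omega

lemma IsPrimitiveElt.isPrimitiveRoot [Fintype F] {α : F} (hα : IsPrimitiveElt α)
    (hα0 : α ≠ 0) :
    IsPrimitiveRoot α (Fintype.card F - 1) := by
  classical
  rw [← Fintype.card_units, ← Nat.card_eq_fintype_card, ← Units.val_mk0 hα0,
    IsPrimitiveRoot.coe_units_iff, IsPrimitiveRoot.iff_orderOf]
  refine orderOf_eq_card_of_forall_mem_zpowers fun u => ?_
  obtain ⟨k, hk⟩ := hα u u.ne_zero
  exact ⟨k, Units.ext (by simp [hk])⟩

variable [DecidableEq F]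

lemma mem_cyclo_zero_iff {ζ : F} {e f : ℕ} [NeZero f] (h : IsPrimitiveRoot (ζ ^ e) f) {x : F} :
    x ∈ cyclo ζ e f 0 ↔ x ^ f = 1 := by
  simp only [cyclo, zero_add, pow_mul, Finset.mem_image, Finset.mem_range]
  constructor
  · rintro ⟨j, -, rfl⟩
    rw [← pow_mul, mul_comm, pow_mul, h.pow_eq_one, one_pow]
  · exact h.eq_pow_of_pow_eq_one

variable {α : F} {e f : ℕ} [NeZero f]

lemma zero_notMem_cyclo_zero (hw : IsPrimitiveRoot (α ^ e) f) : (0 : F) ∉ cyclo α e f 0 := by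
  rw [mem_cyclo_zero_iff hw, zero_pow (NeZero.ne f)]
  exact zero_ne_one

lemma one_mem_cyclo_zero (hw : IsPrimitiveRoot (α ^ e) f) : (1 : F) ∈ cyclo α e f 0 :=
  (mem_cyclo_zero_iff hw).2 (one_pow f)

lemma notMem_cyclo_zero (hα : IsPrimitiveRoot α (e * f)) (he : 1 < e) :
    α ∉ cyclo α e f 0 := by
  have hw : IsPrimitiveRoot (α ^ e) f := hα.pow (Nat.mul_pos (by omega) (Nat.pos_of_neZero f)) rfl
  rw [mem_cyclo_zero_iff hw, hα.pow_eq_one_iff_dvd]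
  intro hdvd
  have := Nat.le_of_dvd (Nat.pos_of_neZero f) hdvd
  nlinarith [Nat.pos_of_neZero f]

end FieldFacts

section CyclotomicPDS

variable {F : Type*} [Field F] [Fintype F] [DecidableEq F] {α : F} {e f n k : ℕ} [NeZero f]
  {lam mu : ℤ}

lemma IsPDS.lam_add_mul_mu_of_cyclo (hw : IsPrimitiveRoot (α ^ e) f)
    (hP : IsPDS (e * f + 1) f lam mu (cyclo α e f 0)) : lam + (e - 1) * mu = f - 1 := by
  have h := hP.card_mul_lam_add_mul_mu (zero_notMem_cyclo_zero hw)
  have hf0 : (f : ℤ) ≠ 0 := by exact_mod_cast NeZero.ne f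
  apply mul_left_cancel₀ hf0
  push_cast at h
  linear_combination h

lemma IsPDS.exists_subfield_of_mu_eq_zero (hw : IsPrimitiveRoot (α ^ e) f)
    (hP : IsPDS n k lam mu (cyclo α e f 0)) (hproper : lam ≠ mu) (hmu : mu = 0) :
    ∃ S : Subfield F, (S : Set F) = insert 0 (cyclo α e f 0 : Set F) := by
  have hD (x : F) : x ∈ (cyclo α e f 0 : Set F) ↔ x ^ f = 1 := mem_cyclo_zero_iff hw
  refine exists_subfield_coe_eq_insert_zero (one_mem_cyclo_zero hw)
    (hP.neg_mem hproper (one_mem_cyclo_zero hw)) ?_ ?_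
    (fun x hx y hy hxy => hP.sub_mem_of_mu_eq_zero hmu hx hy hxy)
  · intro x hx y hy
    rw [hD] at *
    rw [mul_pow, hx, hy, one_mul]
  · intro x hx
    rw [hD] at *
    rw [inv_pow, hx, inv_one]

lemma two_add_le_of_subfield_coe_eq_insert_cyclo (hα : IsPrimitiveRoot α (e * f)) (he : 1 < e)
    (hcard : Fintype.card F = e * f + 1) (hcardD : #(cyclo α e f 0) = f) {S : Subfield F}
    (hS : (S : Set F) = insert 0 (cyclo α e f 0 : Set F)) : f + 2 ≤ e := by
  have hef : 0 < e * f := Nat.mul_pos (by omega) (Nat.pos_of_neZero f)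
  have hw : IsPrimitiveRoot (α ^ e) f := hα.pow hef rfl
  have hαS : α ∉ S := by
    rw [← SetLike.mem_coe, hS]
    rintro (h | h)
    exacts [hα.ne_zero hef.ne' h, notMem_cyclo_zero hα he h]
  have hcardS : Nat.card S = f + 1 := by
    rw [← SetLike.coe_sort_coe, hS, ← Finset.coe_insert, Nat.card_coe_set_eq,
      Set.ncard_coe_finset, Finset.card_insert_of_notMem (zero_notMem_cyclo_zero hw), hcardD]
  have := S.card_sq_le_card hαS
  rw [hcardS, hcard] at this
  nlinarith [Nat.pos_of_neZero f]

lemma IsPDS.one_lt_lam_or_one_lt_mu_of_cyclo (hw : IsPrimitiveRoot (α ^ e) f) (hf : 2 < f)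
    (hP : IsPDS n k lam mu (cyclo α e f 0)) (hproper : lam ≠ mu) : 1 < lam ∨ 1 < mu := by
  by_contra! h
  have h1 := one_mem_cyclo_zero hw
  have hwD : α ^ e ∈ cyclo α e f 0 := (mem_cyclo_zero_iff hw).2 hw.pow_eq_one
  obtain ⟨hw_neg, -⟩ := hP.eq_of_sub_eq_sub h.1 h.2 hwD h1 (hP.neg_mem hproper h1)
    (hP.neg_mem hproper hwD) (hw.ne_one (by omega)) (by ring)
  have hdvd := (hw.pow_eq_one_iff_dvd 2).1 (by rw [hw_neg]; norm_num)
  have := Nat.le_of_dvd two_pos hdvd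
  omega

end CyclotomicPDS

theorem proper_pds_e_vs_f_general {F : Type*} [Field F] [Fintype F] [DecidableEq F]
    (q e f : ℕ) (lam mu : ℤ) (α : F)
    (hq : Fintype.card F = q) (hα : IsPrimitiveElt α)
    (hef : q = e * f + 1) (he : 1 < e) (hf : 1 < f)
    (hPDS : IsPDS q f lam mu (cyclo α e f 0)) (hproper : lam ≠ mu) :
    (f < e → ∃ S : Subfield F, (S : Set F) = ↑(insert (0 : F) (cyclo α e f 0))) ∧
    (e < f → (¬ ∃ S : Subfield F, (S : Set F) = ↑(insert (0 : F) (cyclo α e f 0))) ∧ 1 ≤ mu) ∧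
    (2 < f → e ≠ f) := by
  subst hef
  have : NeZero f := ⟨by omega⟩
  have hprim : IsPrimitiveRoot α (e * f) := by
    simpa [hq] using hα.isPrimitiveRoot (hα.ne_zero (by nlinarith))
  have hef : 0 < e * f := Nat.mul_pos (by omega) (by omega)
  have hw : IsPrimitiveRoot (α ^ e) f := hprim.pow hef rfl
  have hrel := hPDS.lam_add_mul_mu_of_cyclo hw
  have hlam := hPDS.lam_nonneg (one_mem_cyclo_zero hw)
  have hmu := hPDS.mu_nonneg (notMem_cyclo_zero hprim he) (hprim.ne_zero hef.ne')
  have hsubfield := hPDS.exists_subfield_of_mu_eq_zero hw hproper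
  have hbound (S : Subfield F) (hS : (S : Set F) = insert 0 (cyclo α e f 0 : Set F)) :=
    two_add_le_of_subfield_coe_eq_insert_cyclo hprim he hq hPDS.2.1 hS
  have hmu_pos (hlt : e < f + 2) : 1 ≤ mu := by
    by_contra! hmu1
    obtain ⟨S, hS⟩ := hsubfield (by omega)
    have := hbound S hS
    omega
  simp only [Finset.coe_insert]
  refine ⟨fun hfe => hsubfield (by nlinarith), fun hfe => ⟨?_, hmu_pos (by omega)⟩, ?_⟩
  · rintro ⟨S, hS⟩
    have := hbound S hS
    omega
  · rintro hf2 rfl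
    have := hmu_pos (by omega)
    rcases hPDS.one_lt_lam_or_one_lt_mu_of_cyclo hw hf2 hproper with h | h <;> nlinarith

/-- Theorem: let `q = p^β = ef+1` and suppose `C₀^e` is a proper `(q,f,λ,μ)`-PDS.  Then
(i) if `e > f` then `C₀^e ∪ {0}` is a subfield of `GF(q)`; (ii) if `e < f` then
`C₀^e ∪ {0}` is not a subfield and `μ ≥ 1`; (iii) `e = f` cannot occur when `f > 2`. -/
theorem proper_pds_e_vs_f {F : Type*} [Field F] [Fintype F] [DecidableEq F]
    (q e f p beta : ℕ) (lam mu : ℤ) (α : F)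
    (hq : Fintype.card F = q) (hα : IsPrimitiveElt α)
    (hef : q = e * f + 1) (he : 1 < e) (hf : 1 < f)
    (hp : p.Prime) (hbeta : 0 < beta) (hpq : q = p ^ beta)
    (hPDS : IsPDS q f lam mu (cyclo α e f 0)) (hproper : lam ≠ mu) :
    (f < e → ∃ S : Subfield F, (S : Set F) = ↑(insert (0 : F) (cyclo α e f 0))) ∧
    (e < f → (¬ ∃ S : Subfield F, (S : Set F) = ↑(insert (0 : F) (cyclo α e f 0))) ∧ 1 ≤ mu) ∧
    (2 < f → e ≠ f) :=
  proper_pds_e_vs_f_general q e f lam mu α hq hα hef he hf hPDS hproper
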